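/- arXiv:1802.03729 — 3 statements merged into one kernel-verified Lean document; each statement's English description precedes it below -/
import Mathlib

section
/- The map sending t to s^{-1}(s-1)^2 = s - 2 + s^{-1} and u to s - s^{-1} extends to a well-defined isomorphism of ℂ-algebras from R to S, whose inverse φ satisfies φ(s) = (t + 2 + u)/2, φ(s^{-1}) = (t + 2 - u)/2, and φ((s-1)^{-1}) = (t^{-1}u - 1)/2. -/
/-! Both `ℂ[t, t⁻¹] = ℂ[t][t⁻¹]` and `S = ℂ[s][(s(s-1))⁻¹]` are localizations of polynomial rings,
so algebra maps out of them are fixed by the image of one generator, which only has to make the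
localized element a unit. Towards `S`, `t ↦ s - 2 + s⁻¹ = (s-1)² s⁻¹` is a unit and `u ↦ s - s⁻¹`
satisfies `(s - s⁻¹)² = (s - 2 + s⁻¹)² + 4(s - 2 + s⁻¹)`. Towards `R`, `a = (t + 2 + u)/2` has
inverse `(t + 2 - u)/2` because `(t + 2)² - u² = 4`, and `a - 1` has inverse `(t⁻¹u - 1)/2`.
The two maps are mutually inverse because they are so on generators. -/

noncomputable section

set_option synthInstance.maxHeartbeats 1000000
set_option maxHeartbeats 1000000

open Polynomial

/-- The polynomial `u² - (t² + 4t)` over the Laurent polynomial ring `ℂ[t,t⁻¹]`. -/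
def threePoly : Polynomial (LaurentPolynomial ℂ) :=
  Polynomial.X ^ 2 - Polynomial.C (LaurentPolynomial.T 2 + 4 * LaurentPolynomial.T 1)

/-- The three-point ring `R = ℂ[t, t⁻¹, u | u² = t² + 4t]`, i.e. the quotient of
`ℂ[t,t⁻¹][u]` by the ideal generated by `u² - t² - 4t`. -/
abbrev R3 : Type := AdjoinRoot threePoly

/-- `t^k` in `R3`, for `k : ℤ`. -/
def tp (k : ℤ) : R3 := AdjoinRoot.of threePoly (LaurentPolynomial.T k)

/-- the element `t` of `R`. -/
def tR : R3 := tp 1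

/-- the element `t⁻¹` of `R`. -/
def tInv : R3 := tp (-1)

/-- the element `u` of `R`. -/
def uR : R3 := AdjoinRoot.root threePoly

/-- The three-point ring `S = ℂ[s, s⁻¹, (s-1)⁻¹]`, realized as the subalgebra of the field of
rational functions `ℂ(s)` generated by `s`, `s⁻¹` and `(s-1)⁻¹`. -/
def Salg : Subalgebra ℂ (RatFunc ℂ) :=
  Algebra.adjoin ℂ {RatFunc.X, RatFunc.X⁻¹, (RatFunc.X - 1)⁻¹}

/-- the element `s` of `S`. -/
def sS : Salg := ⟨RatFunc.X, Algebra.subset_adjoin (Set.mem_insert _ _)⟩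

/-- the element `s⁻¹` of `S`. -/
def sInv : Salg :=
  ⟨RatFunc.X⁻¹, Algebra.subset_adjoin (Set.mem_insert_of_mem _ (Set.mem_insert _ _))⟩

/-- the element `(s-1)⁻¹` of `S`. -/
def sm1Inv : Salg :=
  ⟨(RatFunc.X - 1)⁻¹,
    Algebra.subset_adjoin (Set.mem_insert_of_mem _ (Set.mem_insert_of_mem _ rfl))⟩

lemma algebraMap_inv_two_mul_two (k A : Type*) [Field k] [NeZero (2 : k)] [Semiring A]
    [Algebra k A] : algebraMap k A 2⁻¹ * 2 = 1 := by
  rw [← map_ofNat (algebraMap k A) 2, ← map_mul, inv_mul_cancel₀ two_ne_zero, map_one]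

instance : IsScalarTower ℂ ℂ[X] (LaurentPolynomial ℂ) :=
  IsScalarTower.of_algebraMap_eq fun r => by
    simp [LaurentPolynomial.algebraMap_eq_toLaurent]

lemma RatFunc.X_sub_one_ne_zero {K : Type*} [Field K] : (RatFunc.X - 1 : RatFunc K) ≠ 0 := by
  simpa [RatFunc.algebraMap_X] using RatFunc.algebraMap_ne_zero (X_sub_C_ne_zero (1 : K))

lemma sS_mul_sInv : sS * sInv = 1 :=
  Subtype.ext (mul_inv_cancel₀ RatFunc.X_ne_zero)

lemma sS_sub_one_mul_sm1Inv : (sS - 1) * sm1Inv = 1 :=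
  Subtype.ext (mul_inv_cancel₀ RatFunc.X_sub_one_ne_zero)

instance : Algebra ℂ[X] Salg := (aeval sS).toAlgebra

lemma Salg.algebraMap_polynomial_apply (p : ℂ[X]) : algebraMap ℂ[X] Salg p = aeval sS p := rfl

instance : IsScalarTower ℂ ℂ[X] Salg :=
  IsScalarTower.of_algebraMap_eq fun r => (aeval_C sS r).symm

lemma Salg.coe_algebraMap_polynomial (p : ℂ[X]) :
    (algebraMap ℂ[X] Salg p : RatFunc ℂ) = algebraMap ℂ[X] (RatFunc ℂ) p := by
  rw [Salg.algebraMap_polynomial_apply, ← Subalgebra.coe_val, ← aeval_algHom_apply]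
  exact RatFunc.aeval_X_left_eq_algebraMap p

open scoped Pointwise in
/-- Multiplying `s`, `s⁻¹` and `(s-1)⁻¹` by `s(s-1)` gives polynomials, hence so does multiplying
any element of `S` by a power of `s(s-1)`. -/
lemma Salg.exists_mul_pow_eq_algebraMap (z : Salg) :
    ∃ (n : ℕ) (p : ℂ[X]), z * algebraMap ℂ[X] Salg (X * (X - 1)) ^ n = algebraMap ℂ[X] Salg p := by
  have hsmul :
      (X * (X - 1) : ℂ[X]) • ({RatFunc.X, RatFunc.X⁻¹, (RatFunc.X - 1)⁻¹} : Set (RatFunc ℂ)) ⊆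
        ((IsScalarTower.toAlgHom ℂ ℂ[X] (RatFunc ℂ)).range : Set (RatFunc ℂ)) := by
    have h0 := RatFunc.X_ne_zero (K := ℂ)
    have h1 := RatFunc.X_sub_one_ne_zero (K := ℂ)
    rintro _ ⟨z, hz, rfl⟩
    simp only [Set.mem_insert_iff, Set.mem_singleton_iff] at hz
    rcases hz with rfl | rfl | rfl
    · exact ⟨X * (X - 1) * X, by simp [Algebra.smul_def, RatFunc.algebraMap_X]⟩
    · exact ⟨X - 1, by simp [Algebra.smul_def, RatFunc.algebraMap_X]; field_simp⟩
    · exact ⟨X, by simp [Algebra.smul_def, RatFunc.algebraMap_X]; field_simp⟩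
  obtain ⟨n, hn⟩ := Algebra.pow_smul_mem_of_smul_subset_of_mem_adjoin _ _ _ hsmul z.2
    ⟨X * (X - 1), rfl⟩
  obtain ⟨p, hp⟩ := hn n le_rfl
  refine ⟨n, p, Subtype.ext ?_⟩
  simp only [Subalgebra.coe_mul, SubmonoidClass.coe_pow, Salg.coe_algebraMap_polynomial]
  rw [← map_pow, mul_comm, ← Algebra.smul_def]
  exact hp.symm

instance : IsLocalization.Away (X * (X - 1) : ℂ[X]) Salg := by
  refine IsLocalization.Away.mk _ ?_ Salg.exists_mul_pow_eq_algebraMap fun p q hpq => ⟨0, ?_⟩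
  · refine IsUnit.of_mul_eq_one (sInv * sm1Inv) ?_
    rw [Salg.algebraMap_polynomial_apply]
    simp only [map_mul, map_sub, aeval_X, map_one]
    linear_combination (sS - 1) * sm1Inv * sS_mul_sInv + sS_sub_one_mul_sm1Inv
  · have := congrArg Subtype.val hpq
    rw [Salg.coe_algebraMap_polynomial, Salg.coe_algebraMap_polynomial] at this
    rw [IsFractionRing.injective ℂ[X] (RatFunc ℂ) this]

lemma LaurentPolynomial.T_two {R : Type*} [Semiring R] :
    (LaurentPolynomial.T 2 : LaurentPolynomial R) = LaurentPolynomial.T 1 ^ 2 := by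
  rw [LaurentPolynomial.T_pow]; rfl

lemma uR_sq : uR ^ 2 = tR ^ 2 + 4 * tR := by
  have h : AdjoinRoot.mk threePoly
      (X ^ 2 - C (LaurentPolynomial.T 2 + 4 * LaurentPolynomial.T 1)) = 0 :=
    AdjoinRoot.mk_self
  rw [map_sub, map_pow, AdjoinRoot.mk_X, AdjoinRoot.mk_C, sub_eq_zero] at h
  rw [uR, h, tR, tp, LaurentPolynomial.T_two, map_add, map_mul, map_pow, map_ofNat]

lemma tInv_mul_tR : tInv * tR = 1 := by
  rw [tInv, tR, tp, tp, ← map_mul, ← LaurentPolynomial.T_add, neg_add_cancel,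
    LaurentPolynomial.T_zero, map_one]

lemma isUnit_sS_sub_two_add_sInv : IsUnit (sS - 2 + sInv) := by
  have hSm1 : IsUnit (sS - 1) := IsUnit.of_mul_eq_one _ sS_sub_one_mul_sm1Inv
  have hSInv : IsUnit sInv := IsUnit.of_mul_eq_one _ (mul_comm sS sInv ▸ sS_mul_sInv)
  convert (hSm1.pow 2).mul hSInv using 1
  linear_combination (2 - sS) * sS_mul_sInv

/-- `ℂ[t, t⁻¹]` is `ℂ[t]` localized away from `t`, so `t ↦ s - 2 + s⁻¹ = (s - 1)² s⁻¹` extends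
to it. -/
def laurentToS : LaurentPolynomial ℂ →ₐ[ℂ] Salg :=
  IsLocalization.Away.liftAlgHom (X : ℂ[X]) (f := aeval (sS - 2 + sInv))
    (by simpa using isUnit_sS_sub_two_add_sInv)

lemma laurentToS_T_one : laurentToS (LaurentPolynomial.T 1) = sS - 2 + sInv := by
  rw [← Polynomial.toLaurent_X, ← LaurentPolynomial.algebraMap_eq_toLaurent, laurentToS,
    IsLocalization.Away.liftAlgHom_apply, IsLocalization.Away.lift_eq]
  exact aeval_X _

lemma sS_sub_sInv_sq :
    (sS - sInv) ^ 2 = (sS - 2 + sInv) ^ 2 + 4 * (sS - 2 + sInv) := by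
  linear_combination (-4 : Salg) * sS_mul_sInv

def toS : R3 →ₐ[ℂ] Salg :=
  AdjoinRoot.liftAlgHom threePoly laurentToS (sS - sInv) <| by
    simp only [threePoly, eval₂_sub, eval₂_pow, eval₂_X, eval₂_C]
    rw [sub_eq_zero, sS_sub_sInv_sq, RingHom.coe_coe, LaurentPolynomial.T_two, map_add, map_mul,
      map_pow, map_ofNat, laurentToS_T_one]

lemma toS_tR : toS tR = sS - 2 + sInv := by
  rw [toS, tR, tp, AdjoinRoot.liftAlgHom_of, laurentToS_T_one]

lemma toS_uR : toS uR = sS - sInv := AdjoinRoot.liftAlgHom_root _ _ _ _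

def sR : R3 := (2 : ℂ)⁻¹ • (tR + 2 + uR)

def sInvR : R3 := (2 : ℂ)⁻¹ • (tR + 2 - uR)

def sm1InvR : R3 := (2 : ℂ)⁻¹ • (tInv * uR - 1)

lemma sR_mul_sInvR : sR * sInvR = 1 := by
  simp only [sR, sInvR, Algebra.smul_def]
  linear_combination (-(algebraMap ℂ R3 2⁻¹) ^ 2) * uR_sq +
    (2 * algebraMap ℂ R3 2⁻¹ + 1) * algebraMap_inv_two_mul_two ℂ R3

lemma sR_sub_one_mul_sm1InvR : (sR - 1) * sm1InvR = 1 := by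
  simp only [sR, sm1InvR, Algebra.smul_def]
  linear_combination (algebraMap ℂ R3 2⁻¹ ^ 2 * tInv) * uR_sq +
    (algebraMap ℂ R3 2⁻¹ ^ 2 * (uR + tR + 4)) * tInv_mul_tR +
    (algebraMap ℂ R3 2⁻¹ * tInv * uR + algebraMap ℂ R3 2⁻¹ + 1) *
      algebraMap_inv_two_mul_two ℂ R3

lemma sR_sub_two_add_sInvR : sR - 2 + sInvR = tR := by
  simp only [sR, sInvR, Algebra.smul_def]
  linear_combination (tR + 2) * algebraMap_inv_two_mul_two ℂ R3

lemma sR_sub_sInvR : sR - sInvR = uR := by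
  simp only [sR, sInvR, Algebra.smul_def]
  linear_combination uR * algebraMap_inv_two_mul_two ℂ R3

def ofS : Salg →ₐ[ℂ] R3 :=
  IsLocalization.Away.liftAlgHom (X * (X - 1) : ℂ[X]) (f := aeval sR) <| by
    refine IsUnit.of_mul_eq_one (sInvR * sm1InvR) ?_
    simp only [map_mul, map_sub, aeval_X, map_one]
    linear_combination (sR - 1) * sm1InvR * sR_mul_sInvR + sR_sub_one_mul_sm1InvR

lemma ofS_algebraMap (p : ℂ[X]) : ofS (algebraMap ℂ[X] Salg p) = aeval sR p := by
  rw [ofS, IsLocalization.Away.liftAlgHom_apply, IsLocalization.Away.lift_eq]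
  rfl

lemma ofS_sS : ofS sS = sR := by
  rw [← aeval_X (R := ℂ) sS, ← Salg.algebraMap_polynomial_apply, ofS_algebraMap, aeval_X]

lemma ofS_sInv : ofS sInv = sInvR :=
  left_inv_eq_right_inv (by rw [mul_comm, ← ofS_sS, ← map_mul, sS_mul_sInv, map_one]) sR_mul_sInvR

lemma ofS_sm1Inv : ofS sm1Inv = sm1InvR :=
  left_inv_eq_right_inv
    (by rw [mul_comm, ← ofS_sS, ← map_one ofS, ← map_sub, ← map_mul, sS_sub_one_mul_sm1Inv])
    sR_sub_one_mul_sm1InvR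

lemma toS_sR : toS sR = sS := by
  rw [sR, map_smul, map_add, map_add, map_ofNat, toS_tR, toS_uR, Algebra.smul_def]
  linear_combination sS * algebraMap_inv_two_mul_two ℂ Salg

lemma toS_comp_ofS : toS.comp ofS = AlgHom.id ℂ Salg := by
  refine IsLocalization.algHom_ext (Submonoid.powers (X * (X - 1) : ℂ[X]))
    (Polynomial.algHom_ext ?_)
  show toS (ofS (algebraMap ℂ[X] Salg X)) = algebraMap ℂ[X] Salg X
  rw [ofS_algebraMap, aeval_X, toS_sR, Salg.algebraMap_polynomial_apply, aeval_X]

lemma ofS_comp_toS : ofS.comp toS = AlgHom.id ℂ R3 := by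
  refine AdjoinRoot.algHom_ext' (IsLocalization.algHom_ext (Submonoid.powers (X : ℂ[X]))
    (Polynomial.algHom_ext ?_)) ?_
  · show ofS (toS (AdjoinRoot.of threePoly (algebraMap ℂ[X] _ X))) =
      AdjoinRoot.of threePoly (algebraMap ℂ[X] _ X)
    rw [LaurentPolynomial.algebraMap_eq_toLaurent, Polynomial.toLaurent_X, ← tp, ← tR, toS_tR,
      map_add, map_sub, map_ofNat, ofS_sS, ofS_sInv, sR_sub_two_add_sInvR]
  · rw [AlgHom.comp_apply, ← uR, toS_uR, map_sub, ofS_sS, ofS_sInv, sR_sub_sInvR, AlgHom.id_apply]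

/-- The map sending `t ↦ s⁻¹(s-1)² = s - 2 + s⁻¹` and `u ↦ s - s⁻¹` extends to a well-defined
isomorphism of `ℂ`-algebras from `R` to `S`, whose inverse `φ` satisfies
`φ(s) = (t + 2 + u)/2`, `φ(s⁻¹) = (t + 2 - u)/2` and `φ((s-1)⁻¹) = (t⁻¹u - 1)/2`. -/
theorem stmt_0 :
    ∃ e : R3 ≃ₐ[ℂ] Salg,
      e tR = sS - 2 + sInv ∧
      e uR = sS - sInv ∧
      e.symm sS = (2 : ℂ)⁻¹ • (tR + 2 + uR) ∧
      e.symm sInv = (2 : ℂ)⁻¹ • (tR + 2 - uR) ∧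
      e.symm sm1Inv = (2 : ℂ)⁻¹ • (tInv * uR - 1) :=
  ⟨AlgEquiv.ofAlgHom toS ofS toS_comp_ofS ofS_comp_toS, toS_tR, toS_uR, ofS_sS, ofS_sInv, ofS_sm1Inv⟩

end
end

section
/- The assignment ψ(t) = (-t^{-1}u - 3 - t - u)/2 and ψ(u) = (t^{-1}u - 1 - t - u)/2 extends to a well-defined ℂ-algebra automorphism ψ of R, and ψ has order 2 (ψ ∘ ψ is the identity). -/
noncomputable section

set_option synthInstance.maxHeartbeats 1000000
set_option maxHeartbeats 1000000

open Polynomial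

/-! `R` is the universal commutative `ℂ`-algebra generated by a unit `t` and a square root `u`
of `t² + 4t`. Hence `ψ` exists as soon as `ψ(t)` is a unit, with inverse
`(t² + 3t - (1 + t)u)/2`, and `ψ(u)² = ψ(t)² + 4ψ(t)`. These, like `ψ(ψ(t)) = t` and
`ψ(ψ(u)) = u`, are polynomial identities modulo `t t⁻¹ = 1`, `u² = t² + 4t` and `2 · ½ = 1`,
so they hold in any commutative ring. Finally `ψ ≠ id`, since at the point `t = -4`, `u = 0`
the function `ψ(t)` takes the value `1/2`. -/

namespace LaurentPolynomial

variable {k : Type*} [CommSemiring k]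

lemma algHom_ext_T_one {A : Type*} [Semiring A] [Algebra k A] {f g : k[T;T⁻¹] →ₐ[k] A}
    (h : f (T 1) = g (T 1)) : f = g := by
  refine AlgHom.coe_ringHom_injective <|
    IsLocalization.ringHom_ext (Submonoid.powers (Polynomial.X : k[X])) ?_
  refine Polynomial.ringHom_ext (fun r => ?_) ?_
  · simpa using (f.commutes r).trans (g.commutes r).symm
  · simpa [← Polynomial.toLaurent_X] using h

variable {A : Type*} [CommSemiring A] [Algebra k A]

def aevalUnit (a : Aˣ) : k[T;T⁻¹] →ₐ[k] A :=
  { eval₂ (algebraMap k A) a with commutes' := eval₂_C _ _ }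

@[simp]
lemma aevalUnit_T (a : Aˣ) (n : ℤ) : aevalUnit (k := k) a (T n) = ↑(a ^ n) :=
  eval₂_T _ _ n

end LaurentPolynomial

section Identities

variable {A : Type*} [CommRing A]

def psiT (t s u h : A) : A := h * (-(s * u) - 3 - t - u)

def psiTInv (t u h : A) : A := h * (t ^ 2 + 3 * t - (1 + t) * u)

def psiU (t s u h : A) : A := h * (s * u - 1 - t - u)

variable {B F : Type*} [CommRing B] [FunLike F A B] [RingHomClass F A B] (f : F) (t s u h : A)

lemma map_psiT : f (psiT t s u h) = psiT (f t) (f s) (f u) (f h) := by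
  simp only [psiT, map_mul, map_sub, map_neg, map_ofNat]

lemma map_psiU : f (psiU t s u h) = psiU (f t) (f s) (f u) (f h) := by
  simp only [psiU, map_mul, map_sub, map_one]

variable {t s u h} (hts : t * s = 1) (hu : u ^ 2 = t ^ 2 + 4 * t) (hh : 2 * h = 1)
include hts hu hh

lemma psiT_mul_psiTInv : psiT t s u h * psiTInv t u h = 1 := by
  unfold psiT psiTInv
  linear_combination (h ^ 2 * (4 - 3 * u + u ^ 2 + t - t * u)) * hts +
    (h ^ 2 * (2 + s + t)) * hu + (1 + 2 * h) * hh

lemma psiU_sq : psiU t s u h ^ 2 = psiT t s u h ^ 2 + 4 * psiT t s u h := by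
  unfold psiT psiU
  linear_combination (h ^ 2 * (-16 - 4 * u - 4 * t)) * hts + (-4 * s * h ^ 2) * hu +
    (h * (-12 - 4 * u - 4 * s * u - 4 * t)) * hh

lemma psiT_psi : psiT (psiT t s u h) (psiTInv t u h) (psiU t s u h) h = t := by
  unfold psiT psiTInv psiU
  linear_combination (h ^ 3 * (4 - 3 * u + u ^ 2 + t - t * u)) * hts + (h ^ 3 * (s - t)) * hu +
    (3 * h + 2 * h ^ 2 - 2 * u * h ^ 2 + t + 2 * t * h + 2 * t * h ^ 2) * hh

lemma psiU_psi : psiU (psiT t s u h) (psiTInv t u h) (psiU t s u h) h = u := by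
  unfold psiT psiTInv psiU
  linear_combination (h ^ 3 * (-4 + 3 * u - u ^ 2 - t + t * u)) * hts + (h ^ 3 * (-s + t)) * hu +
    (h - 2 * h ^ 2 + u + 2 * u * h + 2 * u * h ^ 2 - 2 * t * h ^ 2) * hh

end Identities

lemma tR_mul_tInv : tR * tInv = 1 := by
  rw [tR, tInv, tp, tp, ← map_mul, ← LaurentPolynomial.T_add, add_neg_cancel,
    LaurentPolynomial.T_zero, map_one]

lemma eval₂_threePoly {A : Type*} [CommRing A] (i : LaurentPolynomial ℂ →+* A) (x : A) :
    threePoly.eval₂ i x =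
      x ^ 2 - (i (LaurentPolynomial.T 1) ^ 2 + 4 * i (LaurentPolynomial.T 1)) := by
  rw [threePoly, eval₂_sub, eval₂_X_pow, eval₂_C, show (2 : ℤ) = 1 + 1 from rfl,
    LaurentPolynomial.T_add, map_add, map_mul, map_mul, map_ofNat, ← sq]

namespace R3

variable {A : Type*} [CommRing A] [Algebra ℂ A]

def lift (a : Aˣ) (w : A) (hw : w ^ 2 = a ^ 2 + 4 * a) : R3 →ₐ[ℂ] A :=
  AdjoinRoot.liftAlgHom threePoly (LaurentPolynomial.aevalUnit a) w <| by
    rw [eval₂_threePoly, sub_eq_zero]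
    simpa using hw

variable (a : Aˣ) (w : A) (hw : w ^ 2 = a ^ 2 + 4 * a)

@[simp]
lemma lift_tR : lift a w hw tR = a := by
  simp [lift, tR, tp]

@[simp]
lemma lift_tInv : lift a w hw tInv = ↑a⁻¹ := by
  simp [lift, tInv, tp]

@[simp]
lemma lift_uR : lift a w hw uR = w := by
  simp [lift, uR]

lemma algHom_ext {f g : R3 →ₐ[ℂ] A} (ht : f tR = g tR) (hu : f uR = g uR) : f = g :=
  AdjoinRoot.algHom_ext' (LaurentPolynomial.algHom_ext_T_one ht) hu

end R3

def half : R3 := algebraMap ℂ R3 2⁻¹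

lemma two_mul_half : (2 : R3) * half = 1 := by
  rw [half, ← map_ofNat (algebraMap ℂ R3) 2, ← map_mul, mul_inv_cancel₀ two_ne_zero, map_one]

def psi : R3 →ₐ[ℂ] R3 :=
  R3.lift (Units.mkOfMulEqOne _ _ (psiT_mul_psiTInv tR_mul_tInv uR_sq two_mul_half))
    (psiU tR tInv uR half) (psiU_sq tR_mul_tInv uR_sq two_mul_half)

lemma psi_tR : psi tR = psiT tR tInv uR half := R3.lift_tR ..

lemma psi_tInv : psi tInv = psiTInv tR uR half := R3.lift_tInv ..

lemma psi_uR : psi uR = psiU tR tInv uR half := R3.lift_uR ..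

lemma psi_comp_psi : psi.comp psi = AlgHom.id ℂ R3 := by
  have psi_half : psi half = half := psi.commutes _
  apply R3.algHom_ext
  · rw [AlgHom.comp_apply, psi_tR, map_psiT, psi_tR, psi_tInv, psi_uR, psi_half]
    exact psiT_psi tR_mul_tInv uR_sq two_mul_half
  · rw [AlgHom.comp_apply, psi_uR, map_psiU, psi_tR, psi_tInv, psi_uR, psi_half]
    exact psiU_psi tR_mul_tInv uR_sq two_mul_half

lemma psi_tR_ne : psi tR ≠ tR := by
  let ev : R3 →ₐ[ℂ] ℂ := R3.lift (Units.mk0 (-4) (by norm_num)) 0 (by norm_num)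
  intro h
  have hev := congrArg ev h
  rw [psi_tR, map_psiT] at hev
  norm_num [psiT, ev, half] at hev

/-- The assignment `ψ(t) = (-t⁻¹u - 3 - t - u)/2`, `ψ(u) = (t⁻¹u - 1 - t - u)/2` extends to a
well-defined `ℂ`-algebra automorphism `ψ` of `R`, and `ψ` has order 2 (`ψ ∘ ψ` is the
identity). -/
theorem stmt_2 :
    ∃ ψ : R3 ≃ₐ[ℂ] R3,
      ψ tR = (2 : ℂ)⁻¹ • (-(tInv * uR) - 3 - tR - uR) ∧
      ψ uR = (2 : ℂ)⁻¹ • (tInv * uR - 1 - tR - uR) ∧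
      ψ ≠ AlgEquiv.refl ∧
      ψ.trans ψ = AlgEquiv.refl := by
  refine ⟨AlgEquiv.ofAlgHom psi psi psi_comp_psi psi_comp_psi, ?_, ?_, ?_, ?_⟩
  · exact psi_tR.trans (Algebra.smul_def _ _).symm
  · exact psi_uR.trans (Algebra.smul_def _ _).symm
  · exact fun h => psi_tR_ne (AlgEquiv.congr_fun h tR)
  · exact AlgEquiv.ext (AlgHom.congr_fun psi_comp_psi)

end
end

section
/- For all integers k and l, the class of t^k u · d(t^l u) in Ω_R/dR equals ((l+1) δ_{k+l,-2} + (4l+2) δ_{k+l,-1}) ω₀, where δ is the Kronecker delta. -/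
noncomputable section

set_option synthInstance.maxHeartbeats 1000000
set_option maxHeartbeats 1000000

open Polynomial

abbrev ΩR : Type := KaehlerDifferential ℂ R3

/-- the universal derivation `d : R → Ω_R`. -/
def DR : Derivation ℂ R3 ΩR := KaehlerDifferential.D ℂ R3

/-- the `ℂ`-subspace `dR ⊆ Ω_R` of exact differentials. -/
def dRsub : Submodule ℂ ΩR := LinearMap.range (DR.toLinearMap)

/-- the quotient `Ω_R/dR`. -/
abbrev ΩRq : Type := ΩR ⧸ dRsub

/-- the class of an element of `Ω_R` in `Ω_R/dR`. -/
def clsR (x : ΩR) : ΩRq := Submodule.Quotient.mk (p := dRsub) x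

/-- `ω₀`, the class of `t⁻¹ dt`. -/
def ω0 : ΩRq := clsR (tInv • DR tR)

/-- `ω₁`, the class of `t⁻¹u dt`. -/
def ω1 : ΩRq := clsR ((tInv * uR) • DR tR)


/-
Writing `n = k + l`, the Leibniz rule together with `u du = (t + 2) dt` (half the differential of
`u² = t² + 4t`) gives `t^k u d(t^l u) = (l + 1) t^(n+1) dt + (4l + 2) t^n dt`. For `m ≠ -1` the form
`t^m dt = d(t^(m+1) / (m+1))` is exact, so only `t⁻¹ dt`, i.e. `ω₀`, survives in `Ω_R/dR`.
-/

open LaurentPolynomial in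
theorem Derivation.map_laurentPolynomial_T {R S A M : Type*} [CommSemiring R] [Semiring S]
    [CommSemiring A] [Algebra R A] [AddCommGroup M] [Module A M] [Module R M]
    (D : Derivation R A M) (φ : LaurentPolynomial S →+* A) (n : ℤ) :
    D (φ (T n)) = n • φ (T (n - 1)) • D (φ (T 1)) := by
  set x := φ (T 1)
  set g : ℤ → M := fun n ↦ D (φ (T n)) - n • φ (T (n - 1)) • D x with hg
  have hφ (a b : ℤ) : φ (T (a + b)) = φ (T a) * φ (T b) := by rw [T_add, map_mul]
  -- `g` vanishes at `0` and is propagated in both directions by the unit `x`.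
  have step (n : ℤ) : g (n + 1) = x • g n := by
    have hx : x • φ (T (n - 1)) = φ (T n) := by rw [smul_eq_mul, ← hφ, add_sub_cancel]
    simp only [hg, add_sub_cancel_right, hφ n 1, D.leibniz, smul_sub, smul_comm x (n : ℤ),
      smul_smul x, ← smul_eq_mul x, hx, add_smul, one_smul]
    abel
  have hinv : φ (T (-1)) * x = 1 := by rw [← hφ, neg_add_cancel, T_zero, map_one]
  suffices g n = 0 from sub_eq_zero.1 this
  induction n using Int.induction_on with
  | zero => simp [hg, T_zero]
  | succ i ih => rw [step, ih, smul_zero]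
  | pred i ih =>
    rw [← one_smul A (g _), ← hinv, mul_smul, ← step, sub_add_cancel, ih, smul_zero]

theorem tp_add (a b : ℤ) : tp (a + b) = tp a * tp b := by
  rw [tp, LaurentPolynomial.T_add, map_mul, tp, tp]

theorem DR_tp (n : ℤ) : DR (tp n) = (n : ℂ) • tp (n - 1) • DR tR := by
  rw [Int.cast_smul_eq_zsmul]
  exact DR.map_laurentPolynomial_T (AdjoinRoot.of threePoly) n

theorem uR_mul_self : uR * uR = tp 2 + 4 * tR := by
  have h : AdjoinRoot.mk threePoly
      (X ^ 2 - C (LaurentPolynomial.T 2 + 4 * LaurentPolynomial.T 1)) = 0 :=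
    AdjoinRoot.mk_self
  rw [map_sub, map_pow, AdjoinRoot.mk_X, AdjoinRoot.mk_C, sub_eq_zero, map_add, map_mul,
    map_ofNat] at h
  rw [← sq]
  exact h

theorem uR_smul_DR_uR : uR • DR uR = (tR + 2) • DR tR := by
  have h4 : DR 4 = 0 := by simpa using DR.map_natCast 4
  have h : (2 : ℂ) • (uR • DR uR) = (2 : ℂ) • ((tR + 2) • DR tR) := by
    rw [two_smul, ← DR.leibniz, uR_mul_self, map_add, DR_tp, DR.leibniz, h4, smul_zero, add_zero,
      show tp (2 - 1) = tR from rfl]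
    match_scalars
    simp only [map_ofNat]
    ring
  exact smul_right_injective ΩR two_ne_zero h

theorem clsR_tp_smul_DR_tR (m : ℤ) : clsR (tp m • DR tR) = if m = -1 then ω0 else 0 := by
  split_ifs with hm
  · rw [hm]; rfl
  · have hm' : ((m + 1 : ℤ) : ℂ) ≠ 0 := by exact_mod_cast (show m + 1 ≠ 0 by omega)
    refine (Submodule.Quotient.mk_eq_zero _).2 ⟨((m + 1 : ℤ) : ℂ)⁻¹ • tp (m + 1), ?_⟩
    change DR _ = _
    rw [DR.map_smul, DR_tp, add_sub_cancel_right, smul_smul, inv_mul_cancel₀ hm', one_smul]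

theorem tp_mul_uR_smul_DR (k l : ℤ) :
    (tp k * uR) • DR (tp l * uR) =
      ((l : ℂ) + 1) • tp (k + l + 1) • DR tR + (4 * (l : ℂ) + 2) • tp (k + l) • DR tR := by
  have hn1 : tp (k + l + 1) = tp (k + l) * tR := tp_add _ _
  have h2 : tp k * tp (l - 1) * tp 2 = tp (k + l) * tR := by
    rw [← tp_add, ← tp_add, ← hn1]; congr 1; ring
  have h1 : tp k * tp (l - 1) * tR = tp (k + l) := by
    rw [tR, ← tp_add, ← tp_add]; congr 1; ring
  have hdu : (tp k * uR) • tp l • DR uR = (tp (k + l) * (tR + 2)) • DR tR := by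
    rw [mul_smul (tp (k + l)), ← uR_smul_DR_uR, smul_smul, smul_smul, tp_add, mul_right_comm]
  have hdt : (tp k * uR) • uR • (l : ℂ) • tp (l - 1) • DR tR =
      (l : ℂ) • (tp k * tp (l - 1) * (uR * uR)) • DR tR := by
    rw [smul_comm uR (l : ℂ), smul_comm _ (l : ℂ), smul_smul, smul_smul,
      show tp k * uR * uR * tp (l - 1) = tp k * tp (l - 1) * (uR * uR) by ring]
  rw [DR.leibniz, smul_add, hdu, DR_tp, hdt, uR_mul_self]
  match_scalars
  simp only [map_ofNat, map_intCast]
  linear_combination (l : R3) * h2 + 4 * (l : R3) * h1 - ((l : R3) + 1) * hn1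

/-- For all integers `k` and `l`, the class of `t^k u · d(t^l u)` in `Ω_R/dR` equals
`((l+1) δ_{k+l,-2} + (4l+2) δ_{k+l,-1}) ω₀`. -/
theorem stmt_10 (k l : ℤ) :
    clsR ((tp k * uR) • DR (tp l * uR)) =
      ((if k + l = -2 then (l : ℂ) + 1 else 0) +
        (if k + l = -1 then 4 * (l : ℂ) + 2 else 0)) • ω0 := by
  have hlin (x y : ΩR) (a b : ℂ) : clsR (a • x + b • y) = a • clsR x + b • clsR y := rfl
  rw [tp_mul_uR_smul_DR, hlin, clsR_tp_smul_DR_tR, clsR_tp_smul_DR_tR]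
  split_ifs <;> first | omega | simp

end
end
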